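/- arXiv:2010.14003 — 3 statements merged into one kernel-verified Lean document; each statement's English description precedes it below -/
import Mathlib

section
/- Let q_n be defined by q_0 = 0, q_1 = 1, q_{n+1} = a_n q_n + q_{n-1} with a_n ≥ 1, and let r_n = q_n + q_{n+1} and 𝐫_n = Σ_{i=1}^n r_i. Then for all n ≥ 3, 𝐫_{n-2} ≥ 𝐫_n − r_{n+1}, with equality if and only if a_{n+1} = a_n = 1. -/
/-!
Since `𝐫 n = 𝐫 (n-2) + r (n-1) + r n`, the claim is `r (n-1) + r n ≤ r (n+1)`. Unfolding the
recurrence twice, the excess `r (n+1) - r (n-1) - r n` equals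
`(a (n+1) * a n - 1) * q n + (a (n+1) - 1) * q (n-1)`, a sum of nonnegative terms whose first
one vanishes exactly when `a (n+1) = a n = 1`, because `q n ≥ 1`.
-/

theorem Finset.sum_Icc_one_add_two {M : Type*} [AddCommMonoid M] (f : ℕ → M) (n : ℕ) :
    ∑ i ∈ Icc 1 (n + 2), f i = ∑ i ∈ Icc 1 n, f i + f (n + 1) + f (n + 2) := by
  rw [sum_Icc_succ_top (by omega), sum_Icc_succ_top (by omega)]

theorem mul_sub_one_mul_add_sub_one_mul_nonneg {x y u v : ℤ} (hx : 1 ≤ x) (hy : 1 ≤ y)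
    (hu : 0 ≤ u) (hv : 0 ≤ v) : 0 ≤ (x * y - 1) * u + (x - 1) * v :=
  add_nonneg (mul_nonneg (by nlinarith) hu) (mul_nonneg (by linarith) hv)

theorem mul_sub_one_mul_add_sub_one_mul_eq_zero_iff {x y u v : ℤ} (hx : 1 ≤ x) (hy : 1 ≤ y)
    (hu : 0 < u) (hv : 0 ≤ v) : (x * y - 1) * u + (x - 1) * v = 0 ↔ x = 1 ∧ y = 1 := by
  constructor
  · intro h
    have hxy : (x * y - 1) * u = 0 := by
      have := mul_nonneg (sub_nonneg.mpr hx) hv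
      have := mul_nonneg (show (0 : ℤ) ≤ x * y - 1 by nlinarith) hu.le
      linarith
    have hxy' : x * y = 1 := by
      linarith [(mul_eq_zero.mp hxy).resolve_right hu.ne']
    constructor <;> nlinarith
  · rintro ⟨rfl, rfl⟩
    ring

section ContinuantRecurrence

variable {a q : ℕ → ℕ} (hqrec : ∀ n, 1 ≤ n → q (n + 1) = a n * q n + q (n - 1))
include hqrec

theorem one_le_q_of_recurrence (ha : ∀ n, 1 ≤ a n) (hq1 : q 1 = 1) {n : ℕ} (hn : 1 ≤ n) :
    1 ≤ q n := by
  induction n, hn using Nat.le_induction with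
  | base => exact hq1.ge
  | succ n hn ih =>
    rw [hqrec n hn]
    nlinarith [ha n]

theorem q_add_three_sub_q_sub_two_mul_q_add_one (n : ℕ) :
    (q (n + 3) : ℤ) - q n - 2 * q (n + 1) =
      (a (n + 2) * a (n + 1) - 1) * q (n + 1) + (a (n + 2) - 1) * q n := by
  have h2 := hqrec (n + 1) (by omega)
  have h3 := hqrec (n + 2) (by omega)
  simp only [Nat.add_sub_cancel] at h2 h3
  rw [h3, h2]
  push_cast
  ring

end ContinuantRecurrence

theorem cf_rsum_ge_rsum_sub_r_general
    (a q r R : ℕ → ℕ)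
    (ha : ∀ n, 1 ≤ a n)
    (hq1 : q 1 = 1)
    (hqrec : ∀ n, 1 ≤ n → q (n + 1) = a n * q n + q (n - 1))
    (hr : ∀ n, r n = q n + q (n + 1))
    (hR : ∀ n, R n = ∑ i ∈ Finset.Icc 1 n, r i) :
    ∀ n, 3 ≤ n → (R n : ℤ) - r (n + 1) ≤ (R (n - 2) : ℤ) ∧
      ((R (n - 2) : ℤ) = (R n : ℤ) - r (n + 1) ↔ a (n + 1) = 1 ∧ a n = 1) := by
  intro n hn
  obtain ⟨k, rfl⟩ : ∃ k, n = k + 3 := ⟨n - 3, by omega⟩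
  have hsum : (R (k + 3) : ℤ) = R (k + 1) + r (k + 2) + r (k + 3) := by
    simp only [hR, Finset.sum_Icc_one_add_two]
    push_cast
    rfl
  have hexcess : (r (k + 4) : ℤ) - r (k + 2) - r (k + 3) =
      (a (k + 4) * a (k + 3) - 1) * q (k + 3) + (a (k + 4) - 1) * q (k + 2) := by
    rw [← q_add_three_sub_q_sub_two_mul_q_add_one hqrec, hr, hr, hr]
    push_cast
    ring
  have hx : (1 : ℤ) ≤ a (k + 4) := by exact_mod_cast ha _
  have hy : (1 : ℤ) ≤ a (k + 3) := by exact_mod_cast ha _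
  have hu : (0 : ℤ) < q (k + 3) := by exact_mod_cast one_le_q_of_recurrence hqrec ha hq1 (by omega)
  have hle := mul_sub_one_mul_add_sub_one_mul_nonneg hx hy hu.le (Int.natCast_nonneg (q (k + 2)))
  have hiff := mul_sub_one_mul_add_sub_one_mul_eq_zero_iff hx hy hu (Int.natCast_nonneg (q (k + 2)))
  simp only [Nat.cast_eq_one] at hiff
  rw [show k + 3 - 2 = k + 1 from rfl, ← hiff]
  refine ⟨by linarith, ?_⟩
  constructor <;> intro h <;> linarith

/-- With `q` the continued fraction denominators,
`r n = q n + q (n+1)` and `𝐫 n = ∑_{i=1}^n r i`, for all `n ≥ 3` we have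
`𝐫 (n-2) ≥ 𝐫 n − r (n+1)` (as integers), with equality if and only if
`a (n+1) = a n = 1`. -/
theorem cf_rsum_ge_rsum_sub_r
    (a q r R : ℕ → ℕ)
    (ha : ∀ n, 1 ≤ a n)
    (hq0 : q 0 = 0) (hq1 : q 1 = 1)
    (hqrec : ∀ n, 1 ≤ n → q (n + 1) = a n * q n + q (n - 1))
    (hr : ∀ n, r n = q n + q (n + 1))
    (hR : ∀ n, R n = ∑ i ∈ Finset.Icc 1 n, r i) :
    ∀ n, 3 ≤ n → (R n : ℤ) - r (n + 1) ≤ (R (n - 2) : ℤ) ∧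
      ((R (n - 2) : ℤ) = (R n : ℤ) - r (n + 1) ↔ a (n + 1) = 1 ∧ a n = 1) :=
  cf_rsum_ge_rsum_sub_r_general a q r R ha hq1 hqrec hr hR
end

section
/- Let q_n be the continued fraction denominators with q_{n+1} = a_n q_n + q_{n-1}, q_0 = 0, q_1 = 1, a_n ≥ 1. Define r_n = q_n + q_{n+1} and R^2_k = q_{k+4} − r_k − r_{k-1} − q_{k+2}. Then for k ≥ 3, either a_k = a_{k+1} = a_{k+2} = a_{k+3} = 1 and R^2_k = 0, or R^2_k ≥ q_k. -/
/-!
Each step of the recurrence has excess `q (n+1) - q n - q (n-1) = (a n - 1) q n`, and `R²_k`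
telescopes into the sum of the excesses at `n = k, …, k+3`. So `R²_k` vanishes when the four
partial quotients are `1`; otherwise one summand is at least `q (k+i) ≥ q k`, the others being
nonnegative.
-/

open Finset

section ContinuedFractionDenominators

variable {a q : ℕ → ℕ}

theorem cf_denom_succ_sub_sub (hqrec : ∀ n, 1 ≤ n → q (n + 1) = a n * q n + q (n - 1))
    {n : ℕ} (hn : 1 ≤ n) :
    (q (n + 1) : ℤ) - q n - q (n - 1) = ((a n : ℤ) - 1) * q n := by
  rw [hqrec n hn]
  push_cast
  ring

theorem cf_denom_le_add (ha : ∀ n, 1 ≤ a n)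
    (hqrec : ∀ n, 1 ≤ n → q (n + 1) = a n * q n + q (n - 1)) {k : ℕ} (hk : 1 ≤ k) (i : ℕ) :
    q k ≤ q (k + i) := by
  induction i with
  | zero => rfl
  | succ i ih =>
    calc q k ≤ q (k + i) := ih
      _ ≤ a (k + i) * q (k + i) := Nat.le_mul_of_pos_left _ (ha _)
      _ ≤ q (k + i + 1) := by rw [hqrec _ (by omega)]; exact Nat.le_add_right _ _

theorem cf_R2_eq_sum (hqrec : ∀ n, 1 ≤ n → q (n + 1) = a n * q n + q (n - 1))
    {k : ℕ} (hk : 1 ≤ k) :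
    (q (k + 4) : ℤ) - (q k + q (k + 1)) - (q (k - 1) + q k) - q (k + 2) =
      ∑ i ∈ range 4, ((a (k + i) : ℤ) - 1) * q (k + i) := by
  have e := fun i ↦ cf_denom_succ_sub_sub hqrec (n := k + i) (by omega)
  have e0 := e 0
  have e1 := e 1
  have e2 := e 2
  have e3 := e 3
  simp only [sum_range_succ, sum_range_zero, zero_add, add_zero, add_assoc, Nat.reduceAdd,
    Nat.reduceSubDiff] at e0 e1 e2 e3 ⊢
  linarith

theorem cf_denom_le_excess_sum (ha : ∀ n, 1 ≤ a n)
    (hqrec : ∀ n, 1 ≤ n → q (n + 1) = a n * q n + q (n - 1)) {k m : ℕ} (hk : 1 ≤ k)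
    (hm : ∃ i < m, a (k + i) ≠ 1) :
    (q k : ℤ) ≤ ∑ i ∈ range m, ((a (k + i) : ℤ) - 1) * q (k + i) := by
  obtain ⟨i, him, hai⟩ := hm
  have hnonneg : ∀ j ∈ range m, 0 ≤ ((a (k + j) : ℤ) - 1) * q (k + j) := fun j _ ↦
    mul_nonneg (sub_nonneg.2 (by exact_mod_cast ha _)) (by positivity)
  have hai2 : (2 : ℤ) ≤ a (k + i) := by have := ha (k + i); omega
  calc (q k : ℤ) ≤ q (k + i) := by exact_mod_cast cf_denom_le_add ha hqrec hk i
    _ ≤ ((a (k + i) : ℤ) - 1) * q (k + i) := le_mul_of_one_le_left (by positivity) (by linarith)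
    _ ≤ _ := single_le_sum hnonneg (mem_range.2 him)

end ContinuedFractionDenominators

theorem cf_R2_dichotomy_general
    (a q r : ℕ → ℕ)
    (ha : ∀ n, 1 ≤ a n)
    (hqrec : ∀ n, 1 ≤ n → q (n + 1) = a n * q n + q (n - 1))
    (hr : ∀ n, r n = q n + q (n + 1)) :
    ∀ k, 3 ≤ k →
      ((a k = 1 ∧ a (k + 1) = 1 ∧ a (k + 2) = 1 ∧ a (k + 3) = 1) ∧
        (q (k + 4) : ℤ) - (r k : ℤ) - (r (k - 1) : ℤ) - (q (k + 2) : ℤ) = 0) ∨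
      (q k : ℤ) ≤ (q (k + 4) : ℤ) - (r k : ℤ) - (r (k - 1) : ℤ) - (q (k + 2) : ℤ) := by
  intro k hk
  rw [hr, hr, Nat.sub_add_cancel (by omega)]
  push_cast
  rw [cf_R2_eq_sum hqrec (by omega)]
  by_cases hones : a k = 1 ∧ a (k + 1) = 1 ∧ a (k + 2) = 1 ∧ a (k + 3) = 1
  · refine Or.inl ⟨hones, ?_⟩
    obtain ⟨h0, h1, h2, h3⟩ := hones
    simp [sum_range_succ, h0, h1, h2, h3]
  · right
    refine cf_denom_le_excess_sum ha hqrec (by omega) ?_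
    contrapose! hones
    exact ⟨hones 0 (by norm_num), hones 1 (by norm_num), hones 2 (by norm_num), hones 3 (by norm_num)⟩

/-- With `q` the continued fraction denominators,
`r n = q n + q (n+1)` and `R²_k = q (k+4) − r k − r (k-1) − q (k+2)`,
for `k ≥ 3` either `a k = a (k+1) = a (k+2) = a (k+3) = 1` and `R²_k = 0`,
or `R²_k ≥ q k`. -/
theorem cf_R2_dichotomy
    (a q r : ℕ → ℕ)
    (ha : ∀ n, 1 ≤ a n)
    (hq0 : q 0 = 0) (hq1 : q 1 = 1)
    (hqrec : ∀ n, 1 ≤ n → q (n + 1) = a n * q n + q (n - 1))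
    (hr : ∀ n, r n = q n + q (n + 1)) :
    ∀ k, 3 ≤ k →
      ((a k = 1 ∧ a (k + 1) = 1 ∧ a (k + 2) = 1 ∧ a (k + 3) = 1) ∧
        (q (k + 4) : ℤ) - (r k : ℤ) - (r (k - 1) : ℤ) - (q (k + 2) : ℤ) = 0) ∨
      (q k : ℤ) ≤ (q (k + 4) : ℤ) - (r k : ℤ) - (r (k - 1) : ℤ) - (q (k + 2) : ℤ) :=
  cf_R2_dichotomy_general a q r ha hqrec hr
end

section
/- Let ρ be irrational with continued fraction denominators q_n, r_n = q_n + q_{n+1}, and 𝐫_n = Σ_{i=1}^n r_i. Suppose a sequence of even numbers n_1 < n_2 < ... satisfies n_{i+1} ≥ n_i + 4 for all i ≥ 1, and suppose R_{n_i} < r_{n_i+3} + r_{n_i+5} for i ≥ 1 and R_{n_0} < r_{n_1+1}. Then 𝐑_{n_k} := Σ_{i=0}^k R_{n_i} satisfies 𝐑_{n_k} < 𝐫_{n_k+5} ≤ q_{n_k+9}. -/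
/-!
Since `a n ≥ 1`, the denominators satisfy `q n + q (n+1) ≤ q (n+2)`, hence so do the
`r n = q n + q (n+1)`, and a sequence growing at least like Fibonacci numbers dominates its
partial sums two steps ahead: `𝐫 n < r (n+2) ≤ q (n+4)`. This gives the second inequality.
The first one follows by induction on `k`: passing from `k` to `k+1` adds `R (k+1)`, which is
below `r (N (k+1) + 3) + r (N (k+1) + 5)`, and the gap `N k + 5 < N (k+1) + 3` leaves room for
both of these terms in `𝐫 (N (k+1) + 5)` on top of `𝐫 (N k + 5)`.
-/

open Finset

theorem add_succ_le_of_cf_rec {a q : ℕ → ℕ} (ha : ∀ n, 1 ≤ a n)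
    (hqrec : ∀ n, 1 ≤ n → q (n + 1) = a n * q n + q (n - 1)) (n : ℕ) :
    q n + q (n + 1) ≤ q (n + 2) := by
  have hrec : q (n + 2) = a (n + 1) * q (n + 1) + q n := hqrec (n + 1) n.succ_pos
  have hmul : q (n + 1) ≤ a (n + 1) * q (n + 1) := Nat.le_mul_of_pos_left _ (ha (n + 1))
  omega

theorem sum_Icc_lt_of_add_le {f : ℕ → ℕ} (hf : ∀ n, f n + f (n + 1) ≤ f (n + 2))
    (hf2 : 0 < f 2) (n : ℕ) : ∑ i ∈ Icc 1 n, f i < f (n + 2) := by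
  induction n with
  | zero => simpa using hf2
  | succ n ih =>
    rw [sum_Icc_succ_top (by omega)]
    have h : f (n + 1) + f (n + 2) ≤ f (n + 1 + 2) := hf (n + 1)
    omega

theorem sum_Icc_add_le_sum_Icc {M : Type*} [AddCommMonoid M] [PartialOrder M]
    [IsOrderedAddMonoid M] [CanonicallyOrderedAdd M] (f : ℕ → M) {m j m' : ℕ}
    (hmj : m < j) (hjm' : j ≤ m') :
    ∑ i ∈ Icc 1 m, f i + f j ≤ ∑ i ∈ Icc 1 m', f i := by
  have hj : j ∉ Icc 1 m := by simp only [mem_Icc]; omega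
  calc ∑ i ∈ Icc 1 m, f i + f j = ∑ i ∈ insert j (Icc 1 m), f i := by
        rw [sum_insert hj, add_comm]
    _ ≤ ∑ i ∈ Icc 1 m', f i :=
        sum_le_sum_of_subset (by intro x; simp only [mem_insert, mem_Icc]; omega)

theorem sum_range_lt_sum_Icc_of_sparse (r N R : ℕ → ℕ)
    (hgap : ∀ i, 1 ≤ i → N i + 4 ≤ N (i + 1))
    (hRi : ∀ i, 1 ≤ i → R i < r (N i + 3) + r (N i + 5))
    (hR0 : R 0 < r (N 1 + 1)) (k : ℕ) (hk : 1 ≤ k) :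
    ∑ i ∈ range (k + 1), R i < ∑ i ∈ Icc 1 (N k + 5), r i := by
  have add_two_le (m i : ℕ) (hm : m < N i + 3) :
      ∑ j ∈ Icc 1 m, r j + r (N i + 3) + r (N i + 5) ≤ ∑ j ∈ Icc 1 (N i + 5), r j := by
    have h₁ := sum_Icc_add_le_sum_Icc r (m' := N i + 3) hm le_rfl
    have h₂ := sum_Icc_add_le_sum_Icc r (m := N i + 3) (j := N i + 5) (by omega) le_rfl
    omega
  induction k, hk using Nat.le_induction with
  | base =>
    have h1 := add_two_le (N 1 + 1) 1 (by omega)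
    have h0 := sum_Icc_add_le_sum_Icc r (N 1).lt_add_one le_rfl
    have hR1 := hRi 1 le_rfl
    rw [sum_range_succ, sum_range_one]
    omega
  | succ k hk ih =>
    have h := add_two_le (N k + 5) (k + 1) (by have := hgap k hk; omega)
    have hRk := hRi (k + 1) (by omega)
    rw [sum_range_succ]
    omega

theorem cf_sparse_sum_bound_general
    (a q r Rsum : ℕ → ℕ)
    (ha : ∀ n, 1 ≤ a n)
    (hq1 : q 1 = 1)
    (hqrec : ∀ n, 1 ≤ n → q (n + 1) = a n * q n + q (n - 1))
    (hr : ∀ n, r n = q n + q (n + 1))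
    (hRsum : ∀ n, Rsum n = ∑ i ∈ Finset.Icc 1 n, r i)
    (N R : ℕ → ℕ)
    (hgap : ∀ i, 1 ≤ i → N i + 4 ≤ N (i + 1))
    (hRi : ∀ i, 1 ≤ i → R i < r (N i + 3) + r (N i + 5))
    (hR0 : R 0 < r (N 1 + 1)) :
    ∀ k, 1 ≤ k →
      (∑ i ∈ Finset.range (k + 1), R i) < Rsum (N k + 5) ∧
        Rsum (N k + 5) ≤ q (N k + 9) := by
  intro k hk
  have hq := add_succ_le_of_cf_rec ha hqrec
  have hr_add (n : ℕ) : r n + r (n + 1) ≤ r (n + 2) := by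
    simp only [hr]; linarith [hq n, hq (n + 1)]
  have hr2 : 0 < r 2 := by
    have h : q 1 + q 2 ≤ q 3 := hq 1
    have h₂ : r 2 = q 2 + q 3 := hr 2
    omega
  refine ⟨hRsum _ ▸ sum_range_lt_sum_Icc_of_sparse r N R hgap hRi hR0 k hk, ?_⟩
  calc Rsum (N k + 5) ≤ r (N k + 7) := (hRsum _ ▸ sum_Icc_lt_of_add_le hr_add hr2 _).le
    _ ≤ q (N k + 9) := hr _ ▸ hq _

/-- Let `q` be the continued fraction denominators,
`r n = q n + q (n+1)`, `𝐫 n = ∑_{i=1}^n r i`.  Suppose `N 1 < N 2 < ⋯` is a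
sequence of even numbers with `N (i+1) ≥ N i + 4` for `i ≥ 1`, and suppose
`R i < r (N i + 3) + r (N i + 5)` for `i ≥ 1`, and `R 0 < r (N 1 + 1)`.
Then `𝐑_k = ∑_{i=0}^k R i` satisfies `𝐑_k < 𝐫 (N k + 5) ≤ q (N k + 9)`. -/
theorem cf_sparse_sum_bound
    (a q r Rsum : ℕ → ℕ)
    (ha : ∀ n, 1 ≤ a n)
    (hq0 : q 0 = 0) (hq1 : q 1 = 1)
    (hqrec : ∀ n, 1 ≤ n → q (n + 1) = a n * q n + q (n - 1))
    (hr : ∀ n, r n = q n + q (n + 1))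
    (hRsum : ∀ n, Rsum n = ∑ i ∈ Finset.Icc 1 n, r i)
    (N R : ℕ → ℕ)
    (hEven : ∀ i, 1 ≤ i → Even (N i))
    (hgap : ∀ i, 1 ≤ i → N i + 4 ≤ N (i + 1))
    (hRi : ∀ i, 1 ≤ i → R i < r (N i + 3) + r (N i + 5))
    (hR0 : R 0 < r (N 1 + 1)) :
    ∀ k, 1 ≤ k →
      (∑ i ∈ Finset.range (k + 1), R i) < Rsum (N k + 5) ∧
        Rsum (N k + 5) ≤ q (N k + 9) :=
  cf_sparse_sum_bound_general a q r Rsum ha hq1 hqrec hr hRsum N R hgap hRi hR0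
end
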